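/- arXiv:1211.1516 — 7 statements merged into one kernel-verified Lean document; each statement's English description precedes it below -/
import Mathlib

section
/- Let λ₁ : ℝ → ℂ be differentiable, and define ν₁, ν₂ : ℝ → ℂ by ν₁(−ω) = λ₁(ω) and ν₂(−ω) = −3·λ₁(ω) − ω·λ₁′(ω) for all ω ∈ ℝ. Then for every differentiable function ψ : ℝ → ℂ and every ω ∈ ℝ, the identity (λ₁(ω) + ν₁(−ω) + ν₂(−ω))·ψ(ω) − ω·λ₁(ω)·ψ′(ω) + d/dω( ω·ν₁(−ω)·ψ(ω) ) = 0 holds. -/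
theorem hasDerivAt_ofReal_mul_mul {f g : ℝ → ℂ} {f' g' : ℂ} {x : ℝ}
    (hf : HasDerivAt f f' x) (hg : HasDerivAt g g' x) :
    HasDerivAt (fun t : ℝ => (t : ℂ) * f t * g t)
      (f x * g x + x * f' * g x + x * f x * g') x := by
  have hid : HasDerivAt (fun t : ℝ => (t : ℂ)) 1 x := Complex.ofRealCLM.hasDerivAt
  exact ((hid.mul hf).mul hg).congr_deriv (by simp only [Pi.mul_apply]; ring)

/-- If `ν₁(−ω) = lam₁(ω)` and `ν₂(−ω) = −3 lam₁(ω) − ω lam₁'(ω)`, then the Fourier-space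
identity expressing the vanishing of the first-order term of `L̃_a* ∘ L_a` holds
for every differentiable `ψ`. -/
theorem firstOrder_identity_of_conditions (lam₁ ν₁ ν₂ : ℝ → ℂ)
    (hlam₁ : Differentiable ℝ lam₁)
    (hν₁ : ∀ ω : ℝ, ν₁ (-ω) = lam₁ ω)
    (hν₂ : ∀ ω : ℝ, ν₂ (-ω) = -3 * lam₁ ω - (ω : ℂ) * deriv lam₁ ω) :
    ∀ ψ : ℝ → ℂ, Differentiable ℝ ψ → ∀ ω : ℝ,
      (lam₁ ω + ν₁ (-ω) + ν₂ (-ω)) * ψ ω - (ω : ℂ) * lam₁ ω * deriv ψ ω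
        + deriv (fun x : ℝ => (x : ℂ) * ν₁ (-x) * ψ x) ω = 0 := by
  intro ψ hψ ω
  have hderiv := hasDerivAt_ofReal_mul_mul (hlam₁ ω).hasDerivAt (hψ ω).hasDerivAt
  simp only [hν₁, hν₂, hderiv.deriv]
  ring
end

section
/- Let τ₀ > 0 and γ ∈ (1, 2], and define λ₁ : ℝ∖{0} → ℂ by λ₁(ω) = −(1 + (−i·τ₀·ω)^{γ−1})^{−1/2}, using principal branch complex powers. Then λ₁ is differentiable on ℝ∖{0} and for every ω ≠ 0, −3·λ₁(ω) − ω·λ₁′(ω) = ((7−γ)/2)·(1 + (−i·τ₀·ω)^{γ−1})^{−1/2} + ((γ−1)/2)·(1 + (−i·τ₀·ω)^{γ−1})^{−3/2}. Consequently the function ν₂ defined by ν₂(−ω) = −3·λ₁(ω) − ω·λ₁′(ω) is given by ν₂(ω) = ((7−γ)/2)·(1 + (i·τ₀·ω)^{γ−1})^{−1/2} + ((γ−1)/2)·(1 + (i·τ₀·ω)^{γ−1})^{−3/2}. -/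
/-!
Write `w = -iτ₀ω` and `A = (1 + w^{γ-1})^{-1/2}`, so that `λ₁ = -A`. Since `w` is purely
imaginary, `|arg w^{γ-1}| ≤ (γ - 1)π/2 ≤ π/2`, so `1 + w^{γ-1}` has positive real part and all
powers involved are holomorphic at the relevant points. The scaling `ω ↦ w` is linear, so
`ω λ₁'(ω) = w (d/dw)(-A)`, and the Euler-type identity
`w (d/dw)(1 + w^c)^a = a c ((1 + w^c)^a - (1 + w^c)^{a-1})` gives
`ω λ₁'(ω) = ((γ-1)/2) (A - (1 + w^{γ-1})^{-3/2})`. Replacing `ω` by `-ω` turns `w` into `iτ₀ω`.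
-/

open Complex

namespace Complex

lemma re_cpow_ofReal_nonneg {z : ℂ} (hz : 0 ≤ z.re) {s : ℝ} (hs₀ : 0 ≤ s) (hs₁ : s ≤ 1) :
    0 ≤ (z ^ (s : ℂ)).re := by
  rw [cpow_ofReal_re]
  refine mul_nonneg (Real.rpow_nonneg (norm_nonneg z) s) (Real.cos_nonneg_of_mem_Icc ?_)
  rw [Set.mem_Icc, ← abs_le]
  calc |arg z * s| = |arg z| * s := by rw [abs_mul, abs_of_nonneg hs₀]
    _ ≤ Real.pi / 2 * 1 := mul_le_mul (abs_arg_le_pi_div_two_iff.mpr hz) hs₁ hs₀ (by positivity)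
    _ = Real.pi / 2 := mul_one _

lemma one_add_cpow_ofReal_mem_slitPlane {z : ℂ} (hz : 0 ≤ z.re) {s : ℝ} (hs₀ : 0 ≤ s)
    (hs₁ : s ≤ 1) : 1 + z ^ (s : ℂ) ∈ slitPlane :=
  mem_slitPlane_iff.mpr <| Or.inl <| by
    simpa only [add_re, one_re] using
      add_pos_of_pos_of_nonneg one_pos (re_cpow_ofReal_nonneg hz hs₀ hs₁)

lemma hasDerivAt_one_add_cpow_cpow {a c w : ℂ} (hw : w ∈ slitPlane)
    (h : 1 + w ^ c ∈ slitPlane) :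
    HasDerivAt (fun u => (1 + u ^ c) ^ a) (a * (1 + w ^ c) ^ (a - 1) * (c * w ^ (c - 1))) w :=
  ((hasStrictDerivAt_cpow_const hw).hasDerivAt.const_add 1).cpow_const h

lemma mul_deriv_one_add_cpow_cpow {a c w : ℂ} (hw : w ≠ 0) (h : 1 + w ^ c ≠ 0) :
    w * (a * (1 + w ^ c) ^ (a - 1) * (c * w ^ (c - 1)))
      = a * c * ((1 + w ^ c) ^ a - (1 + w ^ c) ^ (a - 1)) := by
  rw [cpow_sub _ _ hw, cpow_sub _ _ h, cpow_one, cpow_one]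
  field_simp
  ring

end Complex

lemma hasDerivAt_neg_one_add_neg_I_mul_cpow_neg_half {τ s ω : ℝ} (hτ : τ ≠ 0) (hω : ω ≠ 0)
    (hs₀ : 0 ≤ s) (hs₁ : s ≤ 1) :
    HasDerivAt (fun x : ℝ => -(1 + (-(I * τ * x)) ^ (s : ℂ)) ^ (-(1/2) : ℂ))
      ((s / 2 : ℂ) * ((1 + (-(I * τ * ω)) ^ (s : ℂ)) ^ (-(1/2) : ℂ)
        - (1 + (-(I * τ * ω)) ^ (s : ℂ)) ^ (-(3/2) : ℂ)) / ω) ω := by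
  set w : ℂ := -(I * τ * ω)
  have hw_re : w.re = 0 := by simp [w]
  have hw_im : w.im = -(τ * ω) := by simp [w]
  have hw : w ∈ slitPlane :=
    mem_slitPlane_iff.mpr <| Or.inr <| by rw [hw_im]; exact neg_ne_zero.mpr (mul_ne_zero hτ hω)
  have h : 1 + w ^ (s : ℂ) ∈ slitPlane := one_add_cpow_ofReal_mem_slitPlane hw_re.ge hs₀ hs₁
  have hlin : HasDerivAt (fun z : ℂ => -(I * τ * z)) (-(I * τ)) (ω : ℂ) := by
    simpa using ((hasDerivAt_id' (ω : ℂ)).const_mul (I * τ)).fun_neg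
  refine (((hasDerivAt_one_add_cpow_cpow (a := -(1/2)) hw h).comp (ω : ℂ) hlin).fun_neg
    |>.comp_ofReal).congr_deriv ?_
  have hωC : (ω : ℂ) ≠ 0 := ofReal_ne_zero.mpr hω
  have heuler :=
    mul_deriv_one_add_cpow_cpow (a := -(1/2)) (slitPlane_ne_zero hw) (slitPlane_ne_zero h)
  rw [show (-(1/2) : ℂ) - 1 = -(3/2) by norm_num] at heuler ⊢
  field_simp
  linear_combination (-(2 : ℂ)) * heuler

/-- For the KSB model, `lam₁(ω) = −(1 + (−i τ₀ ω)^{γ−1})^{−1/2}` is differentiable on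
`ℝ \ {0}`, the combination `−3lam₁(ω) − ω lam₁'(ω)` has the stated closed form, and
consequently `ν₂(ω)` is given by the stated expression. -/
theorem KSB_nu2 (τ₀ γ : ℝ) (hτ₀ : 0 < τ₀) (hγ : γ ∈ Set.Ioc (1 : ℝ) 2)
    (lam₁ ν₂ : ℝ → ℂ)
    (hlam₁ : ∀ ω : ℝ, ω ≠ 0 →
      lam₁ ω = -(1 + (-(Complex.I * (τ₀ : ℂ) * (ω : ℂ))) ^ ((γ : ℂ) - 1)) ^ (-(1/2) : ℂ))
    (hν₂ : ∀ ω : ℝ, ω ≠ 0 → ν₂ (-ω) = -3 * lam₁ ω - (ω : ℂ) * deriv lam₁ ω) :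
    ∀ ω : ℝ, ω ≠ 0 →
      DifferentiableAt ℝ lam₁ ω ∧
      (-3 * lam₁ ω - (ω : ℂ) * deriv lam₁ ω
        = (((7 - γ) / 2 : ℝ) : ℂ) *
            (1 + (-(Complex.I * (τ₀ : ℂ) * (ω : ℂ))) ^ ((γ : ℂ) - 1)) ^ (-(1/2) : ℂ)
          + (((γ - 1) / 2 : ℝ) : ℂ) *
            (1 + (-(Complex.I * (τ₀ : ℂ) * (ω : ℂ))) ^ ((γ : ℂ) - 1)) ^ (-(3/2) : ℂ)) ∧
      ν₂ ω = (((7 - γ) / 2 : ℝ) : ℂ) *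
            (1 + (Complex.I * (τ₀ : ℂ) * (ω : ℂ)) ^ ((γ : ℂ) - 1)) ^ (-(1/2) : ℂ)
          + (((γ - 1) / 2 : ℝ) : ℂ) *
            (1 + (Complex.I * (τ₀ : ℂ) * (ω : ℂ)) ^ ((γ : ℂ) - 1)) ^ (-(3/2) : ℂ) := by
  obtain ⟨hγ₁, hγ₂⟩ := hγ
  have hexp : (γ : ℂ) - 1 = ((γ - 1 : ℝ) : ℂ) := by push_cast; ring
  have hderiv (ω : ℝ) (hω : ω ≠ 0) := (hasDerivAt_neg_one_add_neg_I_mul_cpow_neg_half hτ₀.ne' hω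
    (sub_nonneg.mpr hγ₁.le) (by linarith)).congr_of_eventuallyEq <|
      (eventually_ne_nhds hω).mono fun x hx => (hexp ▸ hlam₁ x hx)
  have hformula (ω : ℝ) (hω : ω ≠ 0) : -3 * lam₁ ω - (ω : ℂ) * deriv lam₁ ω
      = (((7 - γ) / 2 : ℝ) : ℂ) *
          (1 + (-(Complex.I * (τ₀ : ℂ) * (ω : ℂ))) ^ ((γ : ℂ) - 1)) ^ (-(1/2) : ℂ)
        + (((γ - 1) / 2 : ℝ) : ℂ) *
          (1 + (-(Complex.I * (τ₀ : ℂ) * (ω : ℂ))) ^ ((γ : ℂ) - 1)) ^ (-(3/2) : ℂ) := by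
    rw [(hderiv ω hω).deriv, hlam₁ ω hω, hexp]
    field_simp [ofReal_ne_zero.mpr hω]
    push_cast
    ring
  refine fun ω hω => ⟨(hderiv ω hω).differentiableAt, hformula ω hω, ?_⟩
  have hν := hν₂ (-ω) (neg_ne_zero.mpr hω)
  rw [neg_neg] at hν
  rw [hν, hformula (-ω) (neg_ne_zero.mpr hω)]
  simp only [ofReal_neg, mul_neg, neg_neg]
end

section
/- Let α₀ > 0, τ₀ > 0, γ ∈ (1, 2], and define κ̃(ω) = ω·(1 + α₀·(1 + (i·τ₀·ω)^{γ−1})^{−1/2}) for ω > 0, using principal branch complex powers. Then for every ω > 0, |Im κ̃(ω)| ≤ α₀·ω·sin((γ−1)π/4). -/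
/-!
Write `s = (i τ₀ ω)^{γ-1}`. Since `arg (i τ₀ ω) = π/2`, the power has `arg s = (γ-1)π/2 ∈ (0, π/2]`,
so `s` lies in the closed first quadrant. Adding `1` keeps it there, does not increase the argument
and makes the modulus at least `1`. Hence `(1 + s)^{-1/2}` has modulus at most `1` and argument in
`[-(γ-1)π/4, 0]`, which bounds its imaginary part by `sin((γ-1)π/4)`.
-/

open Complex

theorem Real.abs_sin_le_sin_of_abs_le {x y : ℝ} (hxy : |x| ≤ y) (hy : y ≤ Real.pi / 2) :
    |Real.sin x| ≤ Real.sin y := by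
  rw [Real.abs_sin_eq_sin_abs_of_abs_le_pi (by linarith [Real.pi_pos])]
  exact Real.sin_le_sin_of_le_of_le_pi_div_two (by linarith [abs_nonneg x, Real.pi_pos]) hy hxy

namespace Complex

theorem arg_cpow_ofReal {x : ℂ} (hx : x ≠ 0) {y : ℝ}
    (hy : arg x * y ∈ Set.Ioc (-Real.pi) Real.pi) :
    arg (x ^ (y : ℂ)) = arg x * y := by
  have hpolar : x ^ (y : ℂ) =
      ((‖x‖ ^ y : ℝ) : ℂ) * (cos ↑(arg x * y) + sin ↑(arg x * y) * I) := by
    apply Complex.ext <;>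
      simp only [cpow_ofReal_re, cpow_ofReal_im, mul_re, mul_im, add_re, add_im, ofReal_re,
        ofReal_im, I_re, I_im, cos_ofReal_re, cos_ofReal_im, sin_ofReal_re, sin_ofReal_im] <;>
      ring
  rw [hpolar, arg_mul_cos_add_sin_mul_I (Real.rpow_pos_of_pos (norm_pos_iff.2 hx) y) hy]

theorem arg_ofReal_mul_I_cpow {t : ℝ} (ht : 0 < t) {c : ℝ} (hc : -2 < c) (hc' : c ≤ 2) :
    arg ((t * I) ^ (c : ℂ)) = Real.pi / 2 * c := by
  have harg : arg (t * I) = Real.pi / 2 := by rw [arg_real_mul _ ht, arg_I]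
  have hne : (t : ℂ) * I ≠ 0 := mul_ne_zero (ofReal_ne_zero.2 ht.ne') I_ne_zero
  rw [arg_cpow_ofReal hne] <;> rw [harg]
  constructor <;> nlinarith [Real.pi_pos]

theorem arg_ofReal_add_le {r : ℝ} (hr : 0 ≤ r) {z : ℂ} (hre : 0 ≤ z.re) (him : 0 ≤ z.im) :
    arg (r + z) ≤ arg z := by
  rw [arg_of_re_nonneg (by simpa using add_nonneg hr hre), arg_of_re_nonneg hre]
  apply Real.arcsin_le_arcsin
  simp only [add_im, ofReal_im, zero_add]
  rcases him.eq_or_lt with him0 | himpos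
  · simp [← him0]
  have hnorm : ‖z‖ ≤ ‖(r : ℂ) + z‖ := by
    rw [← sq_le_sq₀ (norm_nonneg _) (norm_nonneg _), Complex.sq_norm, Complex.sq_norm,
      normSq_apply, normSq_apply]
    simp only [add_re, ofReal_re, add_im, ofReal_im, zero_add]
    nlinarith
  exact div_le_div_of_nonneg_left him (norm_pos_iff.2 fun h => by simp [h] at himpos) hnorm

theorem abs_im_cpow_ofReal_le_of_nonpos {w : ℂ} (hw : 1 ≤ ‖w‖) {y : ℝ} (hy : y ≤ 0) :
    |(w ^ (y : ℂ)).im| ≤ |Real.sin (arg w * y)| := by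
  rw [cpow_ofReal_im, abs_mul, abs_of_nonneg (Real.rpow_nonneg (norm_nonneg w) y)]
  exact mul_le_of_le_one_left (abs_nonneg _) (Real.rpow_le_one_of_one_le_of_nonpos hw hy)

theorem abs_im_one_add_cpow_neg_half_le {s : ℂ} (h0 : 0 ≤ arg s)
    (h1 : arg s ≤ Real.pi / 2) :
    |((1 + s) ^ (-(1/2) : ℂ)).im| ≤ Real.sin (arg s / 2) := by
  have hre : 0 ≤ s.re := abs_arg_le_pi_div_two_iff.1 (by rwa [abs_of_nonneg h0])
  have him : 0 ≤ s.im := arg_nonneg_iff.1 h0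
  have harg_le : arg (1 + s) ≤ arg s := by simpa using arg_ofReal_add_le zero_le_one hre him
  have harg_nonneg : 0 ≤ arg (1 + s) := arg_nonneg_iff.2 (by simpa using him)
  have hnorm : 1 ≤ ‖1 + s‖ := le_trans (by simpa using hre) (re_le_norm (1 + s))
  have hhalf : (-(1/2) : ℂ) = ((-(1/2) : ℝ) : ℂ) := by push_cast; ring
  rw [hhalf]
  refine (abs_im_cpow_ofReal_le_of_nonpos hnorm (by norm_num)).trans ?_
  exact Real.abs_sin_le_sin_of_abs_le (by rw [abs_le]; constructor <;> linarith) (by linarith)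

end Complex

/-- For the KSB model, `|Im κ̃(ω)| ≤ α₀ ω sin((γ−1)π/4)` for all `ω > 0`, where
`κ̃(ω) = ω (1 + α₀ (1 + (i τ₀ ω)^{γ−1})^{−1/2})`. -/
theorem KSB_im_kappa_bound (α₀ τ₀ γ : ℝ) (hα₀ : 0 < α₀) (hτ₀ : 0 < τ₀)
    (hγ : γ ∈ Set.Ioc (1 : ℝ) 2) :
    ∀ ω : ℝ, 0 < ω →
      |((ω : ℂ) * (1 + (α₀ : ℂ) *
          (1 + (Complex.I * (τ₀ : ℂ) * (ω : ℂ)) ^ ((γ : ℂ) - 1)) ^ (-(1/2) : ℂ))).im| ≤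
        α₀ * ω * Real.sin ((γ - 1) * Real.pi / 4) := by
  intro ω hω
  obtain ⟨hγ1, hγ2⟩ := hγ
  have hbase : I * (τ₀ : ℂ) * ω = ((τ₀ * ω : ℝ) : ℂ) * I := by push_cast; ring
  have hexp : (γ : ℂ) - 1 = ((γ - 1 : ℝ) : ℂ) := by push_cast; ring
  set s := ((τ₀ * ω : ℝ) * I) ^ ((γ - 1 : ℝ) : ℂ) with hs
  have hs_arg : arg s = Real.pi / 2 * (γ - 1) :=
    arg_ofReal_mul_I_cpow (mul_pos hτ₀ hω) (by linarith) (by linarith)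
  have hu : |((1 + s) ^ (-(1/2) : ℂ)).im| ≤ Real.sin ((γ - 1) * Real.pi / 4) := by
    convert abs_im_one_add_cpow_neg_half_le (s := s) _ _ using 2 <;> rw [hs_arg]
    · ring
    all_goals nlinarith [Real.pi_pos]
  have hκ : ((ω : ℂ) * (1 + (α₀ : ℂ) *
      (1 + (I * (τ₀ : ℂ) * (ω : ℂ)) ^ ((γ : ℂ) - 1)) ^ (-(1/2) : ℂ))).im =
      α₀ * ω * ((1 + s) ^ (-(1/2) : ℂ)).im := by
    rw [hbase, hexp, ← hs]
    simp only [mul_im, add_im, ofReal_re, ofReal_im, one_im, zero_mul, zero_add, add_zero]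
    ring
  rw [hκ, abs_mul, abs_of_pos (mul_pos hα₀ hω)]
  exact mul_le_mul_of_nonneg_left hu (mul_pos hα₀ hω).le
end

section
/- Let α₀ > 0, τ₀ > 0, γ ∈ (1, 2], and define κ̃(ω) = ω·(1 + α₀·(1 + (i·τ₀·ω)^{γ−1})^{−1/2}) for ω > 0, using principal branch complex powers. Then lim_{ω → +∞} |Im κ̃(ω)| / ω^{(3−γ)/2} = α₀·τ₀^{(1−γ)/2}·sin((γ−1)π/4). -/
/-!
For `ω > 0` put `r = (τ₀ ω)^{γ-1}` and `E = i^{γ-1} = e^{i(γ-1)π/2}`. Positive real factors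
pass through principal powers, so `(i τ₀ ω)^{γ-1} = r E` and
`(1 + r E)^{-1/2} = r^{-1/2} (r⁻¹ + E)^{-1/2}`; since `ω r^{-1/2} = τ₀^{(1-γ)/2} ω^{(3-γ)/2}`,
the normalised imaginary part is exactly `α₀ τ₀^{(1-γ)/2} |Im (r⁻¹ + E)^{-1/2}|`.
As `r → ∞` this tends to `|Im E^{-1/2}| = sin((γ-1)π/4)`, because `E` lies in the slit plane,
where `z ↦ z^{-1/2}` is continuous.
-/

open Filter Topology

namespace Complex

theorem ofReal_mul_cpow {s : ℝ} (hs : 0 < s) {w : ℂ} (hw : w ≠ 0) (p : ℂ) :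
    ((s : ℂ) * w) ^ p = (s : ℂ) ^ p * w ^ p := by
  have hs' : (s : ℂ) ≠ 0 := ofReal_ne_zero.mpr hs.ne'
  rw [cpow_def_of_ne_zero (mul_ne_zero hs' hw), cpow_def_of_ne_zero hs', cpow_def_of_ne_zero hw,
    log_ofReal_mul hs hw, ofReal_log hs.le, add_mul, exp_add]

theorem I_cpow_ofReal (p : ℝ) : I ^ (p : ℂ) = exp ((p * Real.pi / 2 : ℝ) * I) := by
  rw [cpow_def_of_ne_zero I_ne_zero, log_I]
  push_cast
  ring_nf

theorem I_cpow_ofReal_mem_slitPlane {p : ℝ} (hp₀ : 0 < p) (hp₂ : p < 2) :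
    I ^ (p : ℂ) ∈ slitPlane := by
  rw [mem_slitPlane_iff, I_cpow_ofReal, exp_ofReal_mul_I_im]
  exact Or.inr (Real.sin_pos_of_pos_of_lt_pi (by positivity) (by nlinarith [Real.pi_pos])).ne'

theorem I_cpow_ofReal_cpow {p : ℝ} (hp₀ : -2 < p) (hp₂ : p ≤ 2) (q : ℂ) :
    (I ^ (p : ℂ)) ^ q = I ^ ((p : ℂ) * q) := by
  have him : (log I * p).im = Real.pi / 2 * p := by
    rw [log_I]
    simp
  rw [cpow_mul _ (by rw [him]; nlinarith [Real.pi_pos]) (by rw [him]; nlinarith [Real.pi_pos])]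

theorem ofReal_add_mem_slitPlane {x : ℝ} (hx : 0 ≤ x) {z : ℂ} (hz : z ∈ slitPlane) :
    (x : ℂ) + z ∈ slitPlane := by
  rw [mem_slitPlane_iff] at hz ⊢
  rcases hz with hre | him
  · left
    simp only [add_re, ofReal_re]
    linarith
  · right
    simpa using him

theorem one_add_ofReal_mul_cpow {x : ℝ} (hx : 0 < x) {z : ℂ} (hz : z ∈ slitPlane) (p : ℂ) :
    (1 + x * z) ^ p = (x : ℂ) ^ p * ((x⁻¹ : ℝ) + z) ^ p := by
  rw [← ofReal_mul_cpow hx (slitPlane_ne_zero (ofReal_add_mem_slitPlane (inv_nonneg.mpr hx.le) hz))]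
  congr 1
  push_cast
  rw [mul_add, mul_inv_cancel₀ (ofReal_ne_zero.mpr hx.ne')]

theorem tendsto_ofReal_inv_add_cpow {z : ℂ} (hz : z ∈ slitPlane) (p : ℂ) :
    Tendsto (fun x : ℝ => ((x⁻¹ : ℝ) + z) ^ p) atTop (𝓝 (z ^ p)) := by
  have h : Tendsto (fun x : ℝ => ((x⁻¹ : ℝ) : ℂ) + z) atTop (𝓝 z) := by
    simpa using ((continuous_ofReal.tendsto 0).comp tendsto_inv_atTop_zero).add_const z
  exact (continuousAt_cpow_const hz).tendsto.comp h

end Complex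

theorem Real.mul_rpow_mul_self_rpow {c x : ℝ} (hc : 0 < c) (hx : 0 < x) (p q : ℝ) :
    x * ((c * x) ^ p) ^ q = c ^ (p * q) * x ^ (1 + p * q) := by
  rw [← Real.rpow_mul (by positivity), Real.mul_rpow hc.le hx.le, Real.rpow_add hx,
    Real.rpow_one]
  ring

open Complex

noncomputable def ksbWavenumber (α₀ τ₀ γ ω : ℝ) : ℂ :=
  (ω : ℂ) * (1 + (α₀ : ℂ) * (1 + (I * (τ₀ : ℂ) * (ω : ℂ)) ^ ((γ : ℂ) - 1)) ^ (-(1/2) : ℂ))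

theorem im_ksbWavenumber_eq {α₀ τ₀ γ ω : ℝ} (hτ₀ : 0 < τ₀) (hω : 0 < ω)
    (hE : I ^ ((γ : ℂ) - 1) ∈ slitPlane) :
    (ksbWavenumber α₀ τ₀ γ ω).im = α₀ * τ₀ ^ ((1 - γ) / 2) * ω ^ ((3 - γ) / 2) *
      (((((τ₀ * ω) ^ (γ - 1))⁻¹ : ℝ) + I ^ ((γ : ℂ) - 1)) ^ (-(1/2) : ℂ)).im := by
  have hτω : 0 < τ₀ * ω := mul_pos hτ₀ hω
  have hr : 0 < (τ₀ * ω) ^ (γ - 1) := Real.rpow_pos_of_pos hτω _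
  have hpow : (I * (τ₀ : ℂ) * (ω : ℂ)) ^ ((γ : ℂ) - 1) =
      (((τ₀ * ω) ^ (γ - 1) : ℝ) : ℂ) * I ^ ((γ : ℂ) - 1) := by
    rw [show I * (τ₀ : ℂ) * (ω : ℂ) = ((τ₀ * ω : ℝ) : ℂ) * I by push_cast; ring,
      ofReal_mul_cpow hτω I_ne_zero, ofReal_cpow hτω.le]
    push_cast
    rfl
  have hscale :
      ω * ((τ₀ * ω) ^ (γ - 1)) ^ (-(1/2) : ℝ) = τ₀ ^ ((1 - γ) / 2) * ω ^ ((3 - γ) / 2) := by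
    rw [Real.mul_rpow_mul_self_rpow hτ₀ hω]
    ring_nf
  rw [ksbWavenumber, hpow, one_add_ofReal_mul_cpow hr hE,
    show (-(1/2) : ℂ) = ((-(1/2) : ℝ) : ℂ) by push_cast; rfl, ← ofReal_cpow hr.le, mul_assoc α₀,
    ← hscale]
  simp only [mul_im, add_im, one_im, ofReal_re, ofReal_im, mul_re]
  ring

theorem abs_im_I_cpow_sub_one_cpow_neg_half {γ : ℝ} (hγ : γ ∈ Set.Ioc (1 : ℝ) 2) :
    |((I ^ ((γ : ℂ) - 1)) ^ (-(1/2) : ℂ)).im| = Real.sin ((γ - 1) * Real.pi / 4) := by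
  obtain ⟨hγ₁, hγ₂⟩ := hγ
  rw [show (γ : ℂ) - 1 = ((γ - 1 : ℝ) : ℂ) by push_cast; rfl,
    I_cpow_ofReal_cpow (by linarith) (by linarith),
    show ((γ - 1 : ℝ) : ℂ) * -(1/2) = ((-(γ - 1) / 2 : ℝ) : ℂ) by push_cast; ring,
    I_cpow_ofReal, exp_ofReal_mul_I_im,
    show -(γ - 1) / 2 * Real.pi / 2 = -((γ - 1) * Real.pi / 4) by ring, Real.sin_neg, abs_neg,
    abs_of_nonneg]
  exact Real.sin_nonneg_of_nonneg_of_le_pi (by nlinarith [Real.pi_pos]) (by nlinarith [Real.pi_pos])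

/-- For the KSB model, `|Im κ̃(ω)| / ω^{(3−γ)/2} → α₀ τ₀^{(1−γ)/2} sin((γ−1)π/4)`
as `ω → +∞`. -/
theorem KSB_im_kappa_asymptotics (α₀ τ₀ γ : ℝ) (hα₀ : 0 < α₀) (hτ₀ : 0 < τ₀)
    (hγ : γ ∈ Set.Ioc (1 : ℝ) 2) :
    Tendsto (fun ω : ℝ =>
        |((ω : ℂ) * (1 + (α₀ : ℂ) *
            (1 + (Complex.I * (τ₀ : ℂ) * (ω : ℂ)) ^ ((γ : ℂ) - 1)) ^ (-(1/2) : ℂ))).im| /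
          ω ^ ((3 - γ) / 2))
      atTop (𝓝 (α₀ * τ₀ ^ ((1 - γ) / 2) * Real.sin ((γ - 1) * Real.pi / 4))) := by
  have hE : I ^ ((γ : ℂ) - 1) ∈ slitPlane := by
    simpa using I_cpow_ofReal_mem_slitPlane (p := γ - 1) (by linarith [hγ.1]) (by linarith [hγ.2])
  have hr : Tendsto (fun ω => (τ₀ * ω) ^ (γ - 1)) atTop atTop :=
    (tendsto_rpow_atTop (by linarith [hγ.1])).comp (tendsto_id.const_mul_atTop hτ₀)
  have hlim := (((continuous_im.tendsto _).comp
    ((tendsto_ofReal_inv_add_cpow hE (-(1/2))).comp hr)).abs).const_mul (α₀ * τ₀ ^ ((1 - γ) / 2))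
  rw [abs_im_I_cpow_sub_one_cpow_neg_half hγ] at hlim
  refine hlim.congr' ?_
  filter_upwards [eventually_gt_atTop 0] with ω hω
  have hωpow : 0 < ω ^ ((3 - γ) / 2) := Real.rpow_pos_of_pos hω _
  change _ = |(ksbWavenumber α₀ τ₀ γ ω).im| / _
  rw [im_ksbWavenumber_eq hτ₀ hω hE, abs_mul, Function.comp_apply, Function.comp_apply,
    abs_of_pos (by positivity : 0 < α₀ * τ₀ ^ ((1 - γ) / 2) * ω ^ ((3 - γ) / 2))]
  field_simp
end

section
/- Let τ > τ̃ > 0 and define κ̃(ω) = ω·((1 + i·ω·τ̃)/(1 + i·ω·τ))^{1/2} for ω > 0 (principal branch square root). Then lim_{ω → +∞} |Im κ̃(ω)| = (1/2)·√(τ̃/τ)·(1/τ̃ − 1/τ). -/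
/-!
With `z ω = (1 + iωτ') / (1 + iωτ)`, both `z ω` and `ω · Im (z ω) = ω² (τ' - τ) / (1 + ω²τ²)` are
ratios of affine functions of a variable tending to infinity, so `z ω → τ'/τ` and
`ω · Im (z ω) → (τ' - τ) / τ²`. Squaring `√z` gives `Im z = 2 Re √z · Im √z`, and `Re √z → √(τ'/τ) > 0`,
hence `ω · Im √z → (τ' - τ) / (2 τ² √(τ'/τ))`, whose absolute value is the claimed constant.
-/

open Filter Topology

theorem Filter.Tendsto.add_mul_div_add_mul_of_cobounded {α 𝕜 : Type*} [NormedField 𝕜]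
    {l : Filter α} {f : α → 𝕜} (hf : Tendsto f l (Bornology.cobounded 𝕜)) (a b c : 𝕜) {d : 𝕜}
    (hd : d ≠ 0) :
    Tendsto (fun x => (a + b * f x) / (c + d * f x)) l (𝓝 (b / d)) := by
  have hinv : Tendsto (fun x => (f x)⁻¹) l (𝓝 0) := tendsto_inv₀_cobounded.comp hf
  have hlim : Tendsto (fun x => (a * (f x)⁻¹ + b) / (c * (f x)⁻¹ + d)) l
      (𝓝 ((a * 0 + b) / (c * 0 + d))) :=
    ((hinv.const_mul a).add_const b).div ((hinv.const_mul c).add_const d) (by simpa using hd)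
  rw [mul_zero, mul_zero, zero_add, zero_add] at hlim
  refine hlim.congr' ?_
  filter_upwards [hf.eventually_ne_cobounded 0] with x hx
  rw [← mul_div_mul_right _ _ hx]
  field_simp

theorem Complex.tendsto_ofReal_atTop_cobounded :
    Tendsto ((↑) : ℝ → ℂ) atTop (Bornology.cobounded ℂ) := by
  rw [← tendsto_norm_atTop_iff_cobounded]
  simpa only [Complex.norm_real, Real.norm_eq_abs] using tendsto_abs_atTop_atTop

theorem Complex.ofReal_cpow_one_half {x : ℝ} (hx : 0 ≤ x) :
    (x : ℂ) ^ (1 / 2 : ℂ) = (√x : ℂ) := by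
  rw [Real.sqrt_eq_rpow, Complex.ofReal_cpow hx]
  norm_num

theorem Complex.im_eq_two_mul_re_mul_im_cpow_one_half (z : ℂ) :
    z.im = 2 * (z ^ (1 / 2 : ℂ)).re * (z ^ (1 / 2 : ℂ)).im := by
  conv_lhs => rw [← Complex.cpow_ofNat_inv_pow z 2]
  rw [one_div, sq, Complex.mul_im]
  ring

theorem Filter.Tendsto.mul_im_cpow_one_half {α : Type*} {l : Filter α} {z : α → ℂ}
    {g : α → ℝ} {c L : ℝ} (hz : Tendsto z l (𝓝 c)) (hc : 0 < c)
    (hg : Tendsto (fun x => g x * (z x).im) l (𝓝 L)) :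
    Tendsto (fun x => g x * (z x ^ (1 / 2 : ℂ)).im) l (𝓝 (L / (2 * √c))) := by
  have hsqrt : Tendsto (fun x => z x ^ (1 / 2 : ℂ)) l (𝓝 (√c : ℂ)) := by
    rw [← Complex.ofReal_cpow_one_half hc.le]
    exact (continuousAt_cpow_const (Complex.ofReal_mem_slitPlane.2 hc)).tendsto.comp hz
  have hre : Tendsto (fun x => 2 * (z x ^ (1 / 2 : ℂ)).re) l (𝓝 (2 * √c)) := by
    simpa using (Complex.continuous_re.tendsto _ |>.comp hsqrt).const_mul 2
  have hc2 : 2 * √c ≠ 0 := by positivity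
  refine (hg.div hre hc2).congr' ?_
  filter_upwards [hre.eventually_ne hc2] with x hx
  rw [Pi.div_apply, Complex.im_eq_two_mul_re_mul_im_cpow_one_half (z x)]
  have hre0 : (z x ^ (1 / 2 : ℂ)).re ≠ 0 := right_ne_zero_of_mul hx
  field_simp

/-- For the NSW model with one relaxation process,
`|Im κ̃(ω)| → (1/2) √(τ'/τ) (1/τ' − 1/τ)` as `ω → +∞`, where
`κ̃(ω) = ω √((1 + iωτ')/(1 + iωτ))`. -/
theorem NSW_im_kappa_high_freq (τ τ' : ℝ) (hτ : τ' < τ) (hτ' : 0 < τ') :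
    Tendsto (fun ω : ℝ =>
        |((ω : ℂ) * (((1 + Complex.I * (ω : ℂ) * (τ' : ℂ)) /
            (1 + Complex.I * (ω : ℂ) * (τ : ℂ))) ^ ((1/2 : ℂ)))).im|)
      atTop (𝓝 ((1/2) * Real.sqrt (τ' / τ) * (1 / τ' - 1 / τ))) := by
  have hτ0 : 0 < τ := hτ'.trans hτ
  set z : ℝ → ℂ := fun ω => (1 + Complex.I * ω * τ') / (1 + Complex.I * ω * τ)
  have hz : Tendsto z atTop (𝓝 ((τ' / τ : ℝ) : ℂ)) := by
    have := Complex.tendsto_ofReal_atTop_cobounded.add_mul_div_add_mul_of_cobounded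
      1 (Complex.I * τ') 1 (mul_ne_zero Complex.I_ne_zero (Complex.ofReal_ne_zero.2 hτ0.ne'))
    convert this using 2 with ω
    · simp only [z]; ring_nf
    · push_cast; field_simp
  have him : Tendsto (fun ω : ℝ => ω * (z ω).im) atTop (𝓝 ((τ' - τ) / τ ^ 2)) := by
    have hsq := (tendsto_pow_atTop (α := ℝ) two_ne_zero).mono_right
      IsOrderBornology.atTop_le_cobounded
    refine (hsq.add_mul_div_add_mul_of_cobounded 0 (τ' - τ) 1 (pow_ne_zero 2 hτ0.ne')).congr
      fun ω => ?_
    simp only [z, Complex.div_im, Complex.add_im, Complex.one_im, Complex.mul_im, Complex.mul_re,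
      Complex.I_re, Complex.ofReal_re, Complex.I_im, Complex.ofReal_im, Complex.add_re,
      Complex.one_re, Complex.normSq_apply, zero_add, zero_mul, mul_zero, sub_self, one_mul,
      add_zero, mul_one]
    field_simp
  convert (hz.mul_im_cpow_one_half (div_pos hτ' hτ0) him).abs using 2 with ω
  · simp [z, Complex.mul_im]
  · have hs : √(τ' / τ) ^ 2 = τ' / τ := Real.sq_sqrt (by positivity)
    have hs0 : 0 < √(τ' / τ) := Real.sqrt_pos.2 (by positivity)
    rw [abs_div, abs_of_neg (div_neg_of_neg_of_pos (sub_neg.2 hτ) (by positivity)),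
      abs_of_pos (by positivity)]
    field_simp
    rw [hs]
    field_simp
    ring
end

section
/- Let N ∈ ℕ with N ≥ 1 and let τ_j > τ̃_j > 0 for j = 1, …, N. Define κ̃(ω) = ω·((1/N)·Σ_{j=1}^N (1 + i·ω·τ̃_j)/(1 + i·ω·τ_j))^{1/2} for ω > 0 (principal branch square root). Then lim_{ω → 0⁺} |Im κ̃(ω)| / ω² = (1/(2N))·Σ_{j=1}^N (τ_j − τ̃_j). -/
open Filter Topology

/-!
At `ω = 0` every relaxation ratio `(1 + iωτ'_j)/(1 + iωτ_j)` equals `1` and has derivative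
`i(τ'_j − τ_j)`, so their mean `S` satisfies `S 0 = 1`, `S'(0) = (i/N) Σ_j (τ'_j − τ_j)`, and the
principal square root gives `(√S)'(0) = S'(0)/2`. Since `Im √S(0) = 0`, we get
`Im κ̃(ω) = ω · Im √S(ω) = ω² · Im S'(0)/2 + o(ω²)`, and `τ'_j < τ_j` fixes the sign.
-/

theorem hasDerivAt_relaxation_ratio (a b : ℂ) :
    HasDerivAt (fun ω : ℝ => (1 + Complex.I * ω * a) / (1 + Complex.I * ω * b))
      (Complex.I * (a - b)) 0 := by
  have hline : ∀ c : ℂ, HasDerivAt (fun ω : ℝ => 1 + Complex.I * ω * c) (Complex.I * c) 0 :=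
    fun c => by
      simpa using ((Complex.ofRealCLM.hasDerivAt.const_mul Complex.I).mul_const c).const_add 1
  refine ((hline a).div (hline b) (by simp)).congr_deriv ?_
  simp only [Complex.ofReal_zero, mul_zero, zero_mul, add_zero, mul_one, one_mul, one_pow, div_one]
  ring

theorem HasDerivAt.cpow_half_of_eq_one {f : ℝ → ℂ} {f' : ℂ} {x : ℝ}
    (hf : HasDerivAt f f' x) (hx : f x = 1) :
    HasDerivAt (fun y => f y ^ (1 / 2 : ℂ)) (f' / 2) x := by
  have hsqrt := Complex.hasStrictDerivAt_cpow_const (c := (1 / 2 : ℂ))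
    (hx ▸ Complex.one_mem_slitPlane)
  refine (hsqrt.hasDerivAt.scomp x hf).congr_deriv ?_
  rw [hx, Complex.one_cpow, smul_eq_mul]
  ring

theorem tendsto_abs_im_ofReal_mul_div_sq {g : ℝ → ℂ} {g' : ℂ}
    (hg : HasDerivAt g g' 0) (h0 : (g 0).im = 0) :
    Tendsto (fun ω : ℝ => |((ω : ℂ) * g ω).im| / ω ^ 2) (𝓝[≠] 0) (𝓝 |g'.im|) := by
  have him : HasDerivAt (fun ω => (g ω).im) g'.im 0 :=
    Complex.imCLM.hasFDerivAt.comp_hasDerivAt 0 hg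
  refine (hasDerivAt_iff_tendsto_slope.mp him).abs.congr' ?_
  filter_upwards [self_mem_nhdsWithin] with ω (hω : ω ≠ 0)
  simp only [slope, vsub_eq_sub, sub_zero, smul_eq_mul, h0, Complex.mul_im, Complex.ofReal_re,
    Complex.ofReal_im, zero_mul, add_zero, abs_mul, abs_inv]
  rw [← sq_abs ω]
  field_simp

theorem NSW_N_im_kappa_low_freq_general (N : ℕ) (hN : 1 ≤ N) (τ τ' : Fin N → ℝ)
    (hτ : ∀ j, τ' j < τ j) :
    Tendsto (fun ω : ℝ =>
        |((ω : ℂ) * ((((1 : ℂ) / (N : ℂ)) * ∑ j : Fin N,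
            (1 + Complex.I * (ω : ℂ) * (τ' j : ℂ)) /
              (1 + Complex.I * (ω : ℂ) * (τ j : ℂ))) ^ ((1/2 : ℂ)))).im| / ω ^ 2)
      (𝓝[>] (0 : ℝ)) (𝓝 ((1 / (2 * N)) * ∑ j : Fin N, (τ j - τ' j))) := by
  have hN0 : (N : ℂ) ≠ 0 := Nat.cast_ne_zero.mpr (by omega)
  have hmean := (HasDerivAt.fun_sum fun j (_ : j ∈ Finset.univ) =>
    hasDerivAt_relaxation_ratio (τ' j) (τ j)).const_mul ((1 : ℂ) / N)
  have hmean0 : (1 : ℂ) / N * ∑ j : Fin N,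
      (1 + Complex.I * ((0 : ℝ) : ℂ) * τ' j) / (1 + Complex.I * ((0 : ℝ) : ℂ) * τ j) = 1 := by
    simp [hN0]
  have hlim := tendsto_abs_im_ofReal_mul_div_sq
    (hmean.cpow_half_of_eq_one hmean0) (by simp only [hmean0, Complex.one_cpow, Complex.one_im])
  convert hlim.mono_left (nhdsGT_le_nhdsNE 0) using 2
  have hgap : 0 ≤ ∑ j : Fin N, (τ j - τ' j) := Finset.sum_nonneg fun j _ => (sub_pos.2 (hτ j)).le
  have hval : (1 / (N : ℂ) * ∑ j : Fin N, Complex.I * (τ' j - τ j)) / 2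
      = ((-(1 / (2 * N) * ∑ j : Fin N, (τ j - τ' j)) : ℝ) : ℂ) * Complex.I := by
    push_cast
    simp only [← Finset.mul_sum, Finset.sum_sub_distrib]
    ring
  rw [hval, Complex.im_ofReal_mul, Complex.I_im, mul_one, abs_neg, abs_of_nonneg (by positivity)]

/-- For the NSW model with `N` relaxation processes,
`|Im κ̃(ω)| / ω² → (1/(2N)) Σ_j (τ_j − τ'_j)` as `ω → 0⁺`, where
`κ̃(ω) = ω √((1/N) Σ_j (1 + iωτ'_j)/(1 + iωτ_j))`. -/
theorem NSW_N_im_kappa_low_freq (N : ℕ) (hN : 1 ≤ N) (τ τ' : Fin N → ℝ)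
    (hτ : ∀ j, τ' j < τ j) (hτ' : ∀ j, 0 < τ' j) :
    Tendsto (fun ω : ℝ =>
        |((ω : ℂ) * ((((1 : ℂ) / (N : ℂ)) * ∑ j : Fin N,
            (1 + Complex.I * (ω : ℂ) * (τ' j : ℂ)) /
              (1 + Complex.I * (ω : ℂ) * (τ j : ℂ))) ^ ((1/2 : ℂ)))).im| / ω ^ 2)
      (𝓝[>] (0 : ℝ)) (𝓝 ((1 / (2 * N)) * ∑ j : Fin N, (τ j - τ' j))) :=
  NSW_N_im_kappa_low_freq_general N hN τ τ' hτ
end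

section
/- Let λ₁, λ₂ : ℝ → ℂ be twice differentiable, set μ₂(ω) := λ₁(ω)² − λ₂(ω), and define g₁, g₂ : ℝ → ℂ by g₁(ω) := −2·λ₁(ω) − ω·λ₁′(ω) and g₂(ω) := −λ₁(ω)² + λ₂(ω) − g₁(ω)·λ₁(ω) + d/dω[ ω·(−λ₁(ω)² + λ₂(ω) − g₁(ω)·λ₁(ω)) ] − (1/2)·d²/dω²[ (ω·λ₁(ω))² ]. Then for every twice differentiable ψ : ℝ → ℂ and every ω ∈ ℝ, the following identity holds: μ₂(ω)·ψ(ω) − ω·μ₂(ω)·ψ′(ω) + (1/2)·ω²·λ₁(ω)²·ψ″(ω) + g₂(ω)·ψ(ω) + d/dω[ ω·(g₁(ω)·λ₁(ω) − λ₂(ω))·ψ(ω) ] + (1/2)·d²/dω²[ ω²·λ₁(ω)²·ψ(ω) ] + g₁(ω)·λ₁(ω)·ψ(ω) − ω·g₁(ω)·λ₁(ω)·ψ′(ω) + d/dω[ ω·λ₁(ω)²·ψ(ω) ] − d/dω[ ω²·λ₁(ω)²·ψ′(ω) ] = 0. -/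
/-! Expand every derivative of a product by the Leibniz rule, to first order for
`(ω c(ω)) ψ(ω)` and to second order for `(ω² λ₁(ω)²) ψ(ω)`. The derivatives of the coefficient
functions then cancel in pairs, so none of them has to be computed, and what is left is a
polynomial identity in `ψ, ψ', ψ''` whose coefficients vanish because `μ₂ = λ₁² − λ₂`. -/

section

variable {𝕜 𝔸 : Type*} [NontriviallyNormedField 𝕜] [NormedRing 𝔸] [NormedAlgebra 𝕜 𝔸]

variable (𝕜) in
def TwiceDifferentiable (f : 𝕜 → 𝔸) : Prop :=
  Differentiable 𝕜 f ∧ Differentiable 𝕜 (deriv f)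

theorem deriv_fun_mul_eq {f g : 𝕜 → 𝔸} (hf : Differentiable 𝕜 f) (hg : Differentiable 𝕜 g) :
    deriv (fun x => f x * g x) = fun x => deriv f x * g x + f x * deriv g x :=
  funext fun x => deriv_fun_mul (hf x) (hg x)

namespace TwiceDifferentiable

theorem mul {f g : 𝕜 → 𝔸} (hf : TwiceDifferentiable 𝕜 f) (hg : TwiceDifferentiable 𝕜 g) :
    TwiceDifferentiable 𝕜 fun x => f x * g x := by
  obtain ⟨hf, hf'⟩ := hf
  obtain ⟨hg, hg'⟩ := hg
  refine ⟨hf.mul hg, ?_⟩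
  rw [deriv_fun_mul_eq hf hg]
  fun_prop

theorem pow {f : 𝕜 → 𝔸} (hf : TwiceDifferentiable 𝕜 f) :
    ∀ n : ℕ, TwiceDifferentiable 𝕜 fun x => f x ^ n
  | 0 => by simp only [pow_zero]; exact ⟨differentiable_const 1, by simp [differentiable_const]⟩
  | n + 1 => by simp only [pow_succ]; exact (hf.pow n).mul hf

theorem deriv_deriv_mul {f g : 𝕜 → 𝔸} (hf : TwiceDifferentiable 𝕜 f)
    (hg : TwiceDifferentiable 𝕜 g) (x : 𝕜) :
    deriv (deriv fun x => f x * g x) x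
      = deriv (deriv f) x * g x + 2 * (deriv f x * deriv g x) + f x * deriv (deriv g) x := by
  obtain ⟨hf, hf'⟩ := hf
  obtain ⟨hg, hg'⟩ := hg
  rw [deriv_fun_mul_eq hf hg, deriv_fun_add ((hf' x).fun_mul (hg x)) ((hf x).fun_mul (hg' x)),
    deriv_fun_mul (hf' x) (hg x), deriv_fun_mul (hf x) (hg' x), two_mul]
  abel

end TwiceDifferentiable

end

theorem twiceDifferentiable_ofReal : TwiceDifferentiable ℝ fun x : ℝ => (x : ℂ) := by
  have hderiv : deriv (fun x : ℝ => (x : ℂ)) = fun _ => 1 :=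
    funext fun x => by simpa using ((hasDerivAt_id x).ofReal_comp).deriv
  exact ⟨by fun_prop, hderiv ▸ differentiable_const 1⟩

theorem secondOrder_identity_general (lam₁ lam₂ ψ : ℝ → ℂ)
    (hlam₁ : Differentiable ℝ lam₁) (hlam₁' : Differentiable ℝ (deriv lam₁))
    (hlam₂ : Differentiable ℝ lam₂)
    (hψ : Differentiable ℝ ψ) (hψ' : Differentiable ℝ (deriv ψ))
    (μ₂ g₁ g₂ : ℝ → ℂ)
    (hμ₂ : ∀ ω : ℝ, μ₂ ω = lam₁ ω ^ 2 - lam₂ ω)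
    (hg₁ : ∀ ω : ℝ, g₁ ω = -2 * lam₁ ω - (ω : ℂ) * deriv lam₁ ω)
    (hg₂ : ∀ ω : ℝ, g₂ ω = -(lam₁ ω ^ 2) + lam₂ ω - g₁ ω * lam₁ ω
      + deriv (fun x : ℝ => (x : ℂ) * (-(lam₁ x ^ 2) + lam₂ x - g₁ x * lam₁ x)) ω
      - (1/2) * deriv (deriv (fun x : ℝ => ((x : ℂ) * lam₁ x) ^ 2)) ω) :
    ∀ ω : ℝ,
      μ₂ ω * ψ ω - (ω : ℂ) * μ₂ ω * deriv ψ ω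
        + (1/2) * (ω : ℂ) ^ 2 * lam₁ ω ^ 2 * deriv (deriv ψ) ω
        + g₂ ω * ψ ω
        + deriv (fun x : ℝ => (x : ℂ) * (g₁ x * lam₁ x - lam₂ x) * ψ x) ω
        + (1/2) * deriv (deriv (fun x : ℝ => (x : ℂ) ^ 2 * lam₁ x ^ 2 * ψ x)) ω
        + g₁ ω * lam₁ ω * ψ ω - (ω : ℂ) * g₁ ω * lam₁ ω * deriv ψ ω
        + deriv (fun x : ℝ => (x : ℂ) * lam₁ x ^ 2 * ψ x) ω
        - deriv (fun x : ℝ => (x : ℂ) ^ 2 * lam₁ x ^ 2 * deriv ψ x) ω = 0 := by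
  intro ω
  have hg₁d : Differentiable ℝ g₁ := by rw [funext hg₁]; fun_prop
  set u : ℝ → ℂ := fun x => (x : ℂ) * (g₁ x * lam₁ x - lam₂ x)
  set v : ℝ → ℂ := fun x => (x : ℂ) * lam₁ x ^ 2
  set w : ℝ → ℂ := fun x => (x : ℂ) ^ 2 * lam₁ x ^ 2
  have hu : Differentiable ℝ u := by fun_prop
  have hv : Differentiable ℝ v := by fun_prop
  have hw : TwiceDifferentiable ℝ w :=
    (twiceDifferentiable_ofReal.pow 2).mul (TwiceDifferentiable.pow ⟨hlam₁, hlam₁'⟩ 2)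
  have hψ₂ : TwiceDifferentiable ℝ ψ := ⟨hψ, hψ'⟩
  have hg₂_coeff : (fun x : ℝ => (x : ℂ) * (-(lam₁ x ^ 2) + lam₂ x - g₁ x * lam₁ x))
      = fun x => -(u x + v x) := by
    funext x; ring
  have hg₂_sq : (fun x : ℝ => ((x : ℂ) * lam₁ x) ^ 2) = w := by
    funext x; ring
  rw [hμ₂, hg₂, hg₂_coeff, hg₂_sq, deriv.fun_neg, deriv_fun_add (hu ω) (hv ω),
    deriv_fun_mul (hu ω) (hψ ω), deriv_fun_mul (hv ω) (hψ ω),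
    deriv_fun_mul (hw.1 ω) (hψ' ω), hw.deriv_deriv_mul hψ₂]
  ring

/-- The Fourier-space identity expressing the vanishing of the second-order term
`f₂[φ] + g₂[φ] + g₁[f₁[φ]]` of the composed operator `L̃_a* ∘ L_a`, with
`μ₂ = lam₁² − lam₂`, `g₁(ω) = −2lam₁(ω) − ωlam₁'(ω)` and `g₂` given by the second-order
condition. -/
theorem secondOrder_identity (lam₁ lam₂ ψ : ℝ → ℂ)
    (hlam₁ : Differentiable ℝ lam₁) (hlam₁' : Differentiable ℝ (deriv lam₁))
    (hlam₂ : Differentiable ℝ lam₂) (hlam₂' : Differentiable ℝ (deriv lam₂))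
    (hψ : Differentiable ℝ ψ) (hψ' : Differentiable ℝ (deriv ψ))
    (μ₂ g₁ g₂ : ℝ → ℂ)
    (hμ₂ : ∀ ω : ℝ, μ₂ ω = lam₁ ω ^ 2 - lam₂ ω)
    (hg₁ : ∀ ω : ℝ, g₁ ω = -2 * lam₁ ω - (ω : ℂ) * deriv lam₁ ω)
    (hg₂ : ∀ ω : ℝ, g₂ ω = -(lam₁ ω ^ 2) + lam₂ ω - g₁ ω * lam₁ ω
      + deriv (fun x : ℝ => (x : ℂ) * (-(lam₁ x ^ 2) + lam₂ x - g₁ x * lam₁ x)) ω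
      - (1/2) * deriv (deriv (fun x : ℝ => ((x : ℂ) * lam₁ x) ^ 2)) ω) :
    ∀ ω : ℝ,
      μ₂ ω * ψ ω - (ω : ℂ) * μ₂ ω * deriv ψ ω
        + (1/2) * (ω : ℂ) ^ 2 * lam₁ ω ^ 2 * deriv (deriv ψ) ω
        + g₂ ω * ψ ω
        + deriv (fun x : ℝ => (x : ℂ) * (g₁ x * lam₁ x - lam₂ x) * ψ x) ω
        + (1/2) * deriv (deriv (fun x : ℝ => (x : ℂ) ^ 2 * lam₁ x ^ 2 * ψ x)) ω
        + g₁ ω * lam₁ ω * ψ ω - (ω : ℂ) * g₁ ω * lam₁ ω * deriv ψ ω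
        + deriv (fun x : ℝ => (x : ℂ) * lam₁ x ^ 2 * ψ x) ω
        - deriv (fun x : ℝ => (x : ℂ) ^ 2 * lam₁ x ^ 2 * deriv ψ x) ω = 0 :=
  secondOrder_identity_general lam₁ lam₂ ψ hlam₁ hlam₁' hlam₂ hψ hψ' μ₂ g₁ g₂ hμ₂ hg₁ hg₂
end
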